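/- Let V be a finite-dimensional real inner product space and let φ, h : V → V be linear endomorphisms such that h is self-adjoint, h anticommutes with φ (hφ + φh = 0), and the kernel of φ is contained in the kernel of h. Then trace(h) = 0. -/

import Mathlib

/-!
Conjugation by an invertible operator anticommuting with `h` sends `h` to `-h`, so `h` is
traceless. `φ` need not be invertible, but it preserves `range h` and is injective there, since
`range h ∩ ker φ ⊆ range h ∩ ker h = 0` by self-adjointness; and `h` has the same trace on
`range h` as on `V`.
-/

namespace LinearMap

theorem trace_eq_zero_of_anticommute_linearEquiv {R M : Type*} [CommRing R] [NoZeroDivisors R]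
    [CharZero R] [AddCommGroup M] [Module R M] [Module.Free R M] [Module.Finite R M]
    (f : M →ₗ[R] M) (e : M ≃ₗ[R] M) (hanti : ∀ x, f (e x) + e (f x) = 0) :
    trace R M f = 0 := by
  have hconj : e.conj f = -f := by
    ext x
    obtain ⟨y, rfl⟩ := e.surjective x
    simpa [LinearEquiv.conj_apply, eq_neg_iff_add_eq_zero, add_comm] using hanti y
  rw [← CharZero.neg_eq_self_iff, ← map_neg, ← hconj, trace_conj']

variable {K V : Type*} [Field K] [CharZero K] [AddCommGroup V] [Module K V]
  [FiniteDimensional K V]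

theorem trace_eq_zero_of_anticommute_injective (f g : V →ₗ[K] V) (hg : Function.Injective g)
    (hanti : ∀ x, f (g x) + g (f x) = 0) : trace K V f = 0 :=
  trace_eq_zero_of_anticommute_linearEquiv f (LinearEquiv.ofInjectiveEndo g hg) hanti

theorem trace_eq_zero_of_anticommute_of_ker_le (f g : V →ₗ[K] V)
    (hdisj : Disjoint (range f) (ker f)) (hker : ker g ≤ ker f)
    (hanti : ∀ x, f (g x) + g (f x) = 0) : trace K V f = 0 := by
  have hf : ∀ x, f x ∈ range f := mem_range_self f
  have hg : ∀ x ∈ range f, g x ∈ range f := by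
    rintro _ ⟨y, rfl⟩
    exact ⟨-g y, by rw [map_neg, neg_eq_iff_add_eq_zero, hanti]⟩
  have hg_inj : Function.Injective (g.restrict hg) := by
    rw [← ker_eq_bot, Submodule.eq_bot_iff]
    rintro ⟨y, hy⟩ hgy
    have hfy : f y = 0 := hker (congrArg Subtype.val hgy)
    exact Subtype.ext (Submodule.disjoint_def.mp hdisj y hy hfy)
  rw [← trace_restrict_eq_of_forall_mem _ f hf]
  exact trace_eq_zero_of_anticommute_injective _ _ hg_inj fun x => Subtype.ext (hanti x)

end LinearMap

theorem anticommuting_symmetric_trace_zero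
    {V : Type*} [NormedAddCommGroup V] [InnerProductSpace ℝ V]
    [FiniteDimensional ℝ V]
    (φ h : V →ₗ[ℝ] V)
    (hsym : ∀ x y : V, (inner ℝ (h x) y : ℝ) = inner ℝ x (h y))
    (hanti : ∀ x : V, h (φ x) + φ (h x) = 0)
    (hker : LinearMap.ker φ ≤ LinearMap.ker h) :
    LinearMap.trace ℝ V h = 0 := by
  have hdisj : Disjoint (LinearMap.range h) (LinearMap.ker h) := by
    rw [← LinearMap.IsSymmetric.orthogonal_range hsym]
    exact Submodule.orthogonal_disjoint _
  exact LinearMap.trace_eq_zero_of_anticommute_of_ker_le h φ hdisj hker hanti
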